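/- arXiv:2205.14202 — 4 statements merged into one kernel-verified Lean document; each statement's English description precedes it below -/
import Mathlib

section
/- If ᾱ = log(1/min_i p̄_i) / (β − min_i b_i) with β > min_i b_i, then f(ᾱ) ≤ 0 where f(α) = −βα − log(∑_{s'} p̄_{s'} e^{−α b_{s'}}); consequently, since f(0) = 0 and f is concave, any maximizer of f over ℝ₊ lies in [0, ᾱ]. -/
/-!
Keeping only the summand at a minimiser of `b` and bounding its weight below by `min p̄` gives
`f α ≤ log (1 / min p̄) - α (β - min b)`, an affine majorant of slope `-(β - min b) < 0` that
vanishes exactly at `ᾱ`. Hence `f ᾱ ≤ 0`, and since `f 0 = 0`, a maximiser `α` has `f α ≥ 0`,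
which the majorant only allows for `α ≤ ᾱ`.
-/

open Finset Real

noncomputable def klDualObjective {ι : Type*} [Fintype ι] (p b : ι → ℝ) (β α : ℝ) : ℝ :=
  -β * α - log (∑ s, p s * exp (-α * b s))

section

variable {ι : Type*} [Fintype ι] [Nonempty ι]

lemma iInf_mul_exp_le_sum_mul_exp (p b : ι → ℝ) (hp : ∀ i, 0 ≤ p i) (α : ℝ) :
    (⨅ i, p i) * exp (-α * ⨅ i, b i) ≤ ∑ s, p s * exp (-α * b s) := by
  obtain ⟨i, hi⟩ := exists_eq_ciInf_of_finite (f := b)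
  calc (⨅ i, p i) * exp (-α * ⨅ i, b i)
      ≤ p i * exp (-α * b i) := by
        rw [← hi]
        exact mul_le_mul_of_nonneg_right (ciInf_le (Finite.bddBelow_range p) i) (exp_pos _).le
    _ ≤ ∑ s, p s * exp (-α * b s) :=
        single_le_sum (f := fun s => p s * exp (-α * b s))
          (fun s _ => mul_nonneg (hp s) (exp_pos _).le) (mem_univ i)

lemma klDualObjective_le (p b : ι → ℝ) (hp : ∀ i, 0 < p i) (β α : ℝ) :
    klDualObjective p b β α ≤ log (1 / ⨅ i, p i) - α * (β - ⨅ i, b i) := by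
  obtain ⟨i, hi⟩ := exists_eq_ciInf_of_finite (f := p)
  have hpmin : 0 < ⨅ i, p i := hi ▸ hp i
  have hlog := log_le_log (mul_pos hpmin (exp_pos _))
    (iInf_mul_exp_le_sum_mul_exp p b (fun i => (hp i).le) α)
  rw [log_mul hpmin.ne' (exp_pos _).ne', log_exp] at hlog
  rw [one_div, log_inv]
  unfold klDualObjective
  linarith

end

lemma klDualObjective_zero {ι : Type*} [Fintype ι] (p b : ι → ℝ) (hp : ∑ i, p i = 1) (β : ℝ) :
    klDualObjective p b β 0 = 0 := by
  simp [klDualObjective, hp]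

open Finset in
theorem kl_dual_upper_bound_general {S : ℕ} [NeZero S] (pbar b : Fin S → ℝ) (β : ℝ)
    (hp0 : ∀ i, 0 < pbar i) (hp1 : ∑ i, pbar i = 1)
    (hβ : (⨅ i, b i) < β) :
    (fun α : ℝ => -β * α - Real.log (∑ s', pbar s' * Real.exp (-α * b s')))
        (Real.log (1 / ⨅ i, pbar i) / (β - ⨅ i, b i)) ≤ 0 ∧
    ∀ α : ℝ, 0 ≤ α →
      (∀ α' : ℝ, 0 ≤ α' →
        (fun α : ℝ => -β * α - Real.log (∑ s', pbar s' * Real.exp (-α * b s'))) α' ≤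
        (fun α : ℝ => -β * α - Real.log (∑ s', pbar s' * Real.exp (-α * b s'))) α) →
      α ≤ Real.log (1 / ⨅ i, pbar i) / (β - ⨅ i, b i) := by
  have hgap : 0 < β - ⨅ i, b i := sub_pos.2 hβ
  have hmajorant := klDualObjective_le pbar b hp0 β
  refine ⟨?_, fun α _ hmax => ?_⟩
  · have := hmajorant (log (1 / ⨅ i, pbar i) / (β - ⨅ i, b i))
    rwa [div_mul_cancel₀ _ hgap.ne', sub_self] at this
  · have h0 : 0 ≤ klDualObjective pbar b β α :=
      klDualObjective_zero pbar b hp1 β ▸ hmax 0 le_rfl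
    rw [le_div_iff₀ hgap]
    linarith [hmajorant α]

open Finset in
/-- If ᾱ = log(1 / min_i p̄_i) / (β − min_i b_i) with β > min_i b_i, then f(ᾱ) ≤ 0,
where f(α) = −βα − log(∑_{s'} p̄_{s'} e^{−α b_{s'}}); consequently (f(0) = 0, f concave)
any maximizer of f over ℝ₊ lies in [0, ᾱ]. -/
theorem kl_dual_upper_bound {S : ℕ} [NeZero S] (pbar b : Fin S → ℝ) (β : ℝ)
    (hp0 : ∀ i, 0 < pbar i) (hp1 : ∑ i, pbar i = 1)
    (hb : ∀ i, 0 ≤ b i) (hβ : (⨅ i, b i) < β) :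
    (fun α : ℝ => -β * α - Real.log (∑ s', pbar s' * Real.exp (-α * b s')))
        (Real.log (1 / ⨅ i, pbar i) / (β - ⨅ i, b i)) ≤ 0 ∧
    ∀ α : ℝ, 0 ≤ α →
      (∀ α' : ℝ, 0 ≤ α' →
        (fun α : ℝ => -β * α - Real.log (∑ s', pbar s' * Real.exp (-α * b s'))) α' ≤
        (fun α : ℝ => -β * α - Real.log (∑ s', pbar s' * Real.exp (-α * b s'))) α) →
      α ≤ Real.log (1 / ⨅ i, pbar i) / (β - ⨅ i, b i) :=
  kl_dual_upper_bound_general pbar b β hp0 hp1 hβ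
end

section
/- For the KL divergence, the optimal value of the projection problem min{ ∑_{s'} p_{s'} log(p_{s'}/p̄_{s'}) : p ∈ Δ_S, bᵀp ≤ β } equals sup_{α ≥ 0} { −βα − log(∑_{s'} p̄_{s'} e^{−α b_{s'}}) }, provided p̄ ∈ Δ_S with p̄ > 0 and min_i b_i ≤ β < p̄ᵀb. -/
open Finset Real Filter Topology

/-!
Weak duality: for feasible `p` and `α ≥ 0`, let `q_α ∝ p̄ e^{-α b}` be the exponential tilt of `p̄`
with normalizer `Z(α)`. Then `KL(p‖p̄) = KL(p‖q_α) - α bᵀp - log Z(α) ≥ -αβ - log Z(α)` by Gibbs'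
inequality.

Strong duality: the tilted mean `bᵀq_α` is continuous, equals `p̄ᵀb > β` at `α = 0` and tends to
`min b` as `α → ∞`. If `min b < β` it equals `β` at some `α ≥ 0`, where `q_α` is feasible and
`KL(q_α‖p̄)` is the dual value at `α`. If `min b = β`, the limit of `q_α` (`p̄` conditioned on
`{b = min b}`) is feasible; its divergence is the limit of `KL(q_α‖p̄)`, which stays below the dual
values because `bᵀq_α ≥ β`.
-/

theorem csInf_eq_csSup_of_forall_le {α : Type*} [ConditionallyCompleteLattice α] {P D : Set α}
    (hD : D.Nonempty) (hle : ∀ v ∈ P, ∀ w ∈ D, w ≤ v) {v : α} (hvP : v ∈ P)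
    (hv : v ∈ lowerBounds (upperBounds D)) : sInf P = sSup D := by
  obtain ⟨w₀, hw₀⟩ := hD
  have hvD : v ∈ upperBounds D := fun w hw => hle v hvP w hw
  refine le_antisymm ((csInf_le ⟨w₀, fun u hu => hle u hu w₀ hw₀⟩ hvP).trans ?_) ?_
  · exact hv (isLUB_csSup ⟨w₀, hw₀⟩ ⟨v, hvD⟩).1
  · exact csSup_le ⟨w₀, hw₀⟩ fun w hw => le_csInf ⟨v, hvP⟩ fun u hu => hle u hu w hw

theorem tendsto_mul_exp_neg_mul_atTop (c : ℝ) {d : ℝ} (hd : 0 ≤ d) :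
    Tendsto (fun α => c * exp (-α * d)) atTop (𝓝 (if d = 0 then c else 0)) := by
  rcases hd.eq_or_lt with rfl | hd
  · simp
  · have : Tendsto (fun α => -α * d) atTop atBot := tendsto_neg_atTop_atBot.atBot_mul_const hd
    simpa [hd.ne'] using (tendsto_exp_atBot.comp this).const_mul c

variable {ι : Type*} [Fintype ι]

noncomputable def relEntropy (p q : ι → ℝ) : ℝ := ∑ i, p i * log (p i / q i)

noncomputable def partitionFn (q b : ι → ℝ) (α : ℝ) : ℝ := ∑ i, q i * exp (-α * b i)

noncomputable def tilt (q b : ι → ℝ) (α : ℝ) (i : ι) : ℝ :=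
  q i * exp (-α * b i) / partitionFn q b α

noncomputable def klDual (q b : ι → ℝ) (β α : ℝ) : ℝ := -β * α - log (partitionFn q b α)

theorem relEntropy_nonneg {p q : ι → ℝ} (hp : ∀ i, 0 ≤ p i) (hq : ∀ i, 0 < q i)
    (hpq : ∑ i, q i ≤ ∑ i, p i) : 0 ≤ relEntropy p q := by
  have hterm (i : ι) : q i * InformationTheory.klFun (p i / q i)
      = p i * log (p i / q i) + q i - p i := by
    have := (hq i).ne'
    rw [InformationTheory.klFun]
    field_simp
  have hsum := sum_nonneg fun i (_ : i ∈ univ) =>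
    mul_nonneg (hq i).le (InformationTheory.klFun_nonneg (div_nonneg (hp i) (hq i).le))
  simp only [hterm, sum_sub_distrib, sum_add_distrib] at hsum
  rw [relEntropy]
  linarith

theorem relEntropy_self (p : ι → ℝ) : relEntropy p p = 0 := by
  simp [relEntropy]

theorem continuous_relEntropy_left {q : ι → ℝ} (hq : ∀ i, q i ≠ 0) :
    Continuous fun p => relEntropy p q := by
  have h (p : ι → ℝ) : relEntropy p q = ∑ i, (p i * log (p i) - p i * log (q i)) := by
    refine sum_congr rfl fun i _ => ?_
    rcases eq_or_ne (p i) 0 with hpi | hpi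
    · simp [hpi]
    · rw [log_div hpi (hq i)]
      ring
  simp only [h]
  fun_prop

section Tilt

variable {q : ι → ℝ} (b : ι → ℝ)

theorem partitionFn_pos [Nonempty ι] (hq : ∀ i, 0 < q i) (α : ℝ) : 0 < partitionFn q b α :=
  sum_pos (fun i _ => mul_pos (hq i) (exp_pos _)) univ_nonempty

theorem tilt_pos [Nonempty ι] (hq : ∀ i, 0 < q i) (α : ℝ) (i : ι) : 0 < tilt q b α i :=
  div_pos (mul_pos (hq i) (exp_pos _)) (partitionFn_pos b hq α)

theorem sum_tilt [Nonempty ι] (hq : ∀ i, 0 < q i) (α : ℝ) : ∑ i, tilt q b α i = 1 := by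
  simp only [tilt, ← sum_div]
  exact div_self (partitionFn_pos b hq α).ne'

theorem tilt_zero (hq : ∑ i, q i = 1) : tilt q b 0 = q := by
  ext i
  simp [tilt, partitionFn, hq]

theorem tilt_sub_const (c α : ℝ) : tilt q (fun i => b i - c) α = tilt q b α := by
  have hexp (i : ι) : exp (-α * (b i - c)) = exp (-α * b i) * exp (α * c) := by
    rw [← exp_add]
    ring_nf
  ext i
  simp only [tilt, partitionFn, hexp, ← mul_assoc, ← sum_mul]
  exact mul_div_mul_right _ _ (exp_pos _).ne'

theorem continuous_tilt [Nonempty ι] (hq : ∀ i, 0 < q i) : Continuous (tilt q b) := by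
  refine continuous_pi fun i => ?_
  exact Continuous.div (by fun_prop) (by unfold partitionFn; fun_prop)
    fun α => (partitionFn_pos b hq α).ne'

theorem relEntropy_tilt_right [Nonempty ι] (hq : ∀ i, 0 < q i) {p : ι → ℝ} (hp : ∑ i, p i = 1)
    (α : ℝ) : relEntropy p (tilt q b α)
      = relEntropy p q + α * ∑ i, b i * p i + log (partitionFn q b α) := by
  have hZ := (partitionFn_pos b hq α).ne'
  have hterm (i : ι) : p i * log (p i / tilt q b α i)
      = p i * log (p i / q i) + α * (b i * p i) + log (partitionFn q b α) * p i := by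
    rcases eq_or_ne (p i) 0 with hpi | hpi
    · simp [hpi]
    · rw [tilt, log_div hpi (by positivity [hq i]), log_div hpi (hq i).ne',
        log_div (by positivity [hq i]) hZ, log_mul (hq i).ne' (exp_ne_zero _), log_exp]
      ring
  simp only [relEntropy, hterm, sum_add_distrib, ← mul_sum, hp, mul_one]

theorem klDual_eq_relEntropy_tilt_add [Nonempty ι] (hq : ∀ i, 0 < q i) (β α : ℝ) :
    klDual q b β α = relEntropy (tilt q b α) q + α * (∑ i, b i * tilt q b α i - β) := by
  have h := relEntropy_tilt_right b hq (sum_tilt b hq α) α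
  rw [relEntropy_self] at h
  rw [klDual]
  linarith

theorem klDual_le_relEntropy [Nonempty ι] (hq : ∀ i, 0 < q i) {p : ι → ℝ} (hp : ∀ i, 0 ≤ p i)
    (hp1 : ∑ i, p i = 1) {β α : ℝ} (hpb : ∑ i, b i * p i ≤ β) (hα : 0 ≤ α) :
    klDual q b β α ≤ relEntropy p q := by
  have hgibbs : 0 ≤ relEntropy p (tilt q b α) :=
    relEntropy_nonneg hp (tilt_pos b hq α) (by rw [sum_tilt b hq, hp1])
  rw [relEntropy_tilt_right b hq hp1] at hgibbs
  rw [klDual]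
  linarith [mul_le_mul_of_nonneg_left hpb hα]

end Tilt

section TiltTop

variable {q b : ι → ℝ} {m : ℝ} {j : ι}

/-- `q` conditioned on the level set `{b = m}`; for `m = min b` it is the limit of `tilt q b α`
as `α → ∞`. -/
noncomputable def tiltTop (q b : ι → ℝ) (m : ℝ) (i : ι) : ℝ :=
  if b i = m then q i / ∑ k with b k = m, q k else 0

theorem tiltTop_nonneg (hq : ∀ i, 0 ≤ q i) (i : ι) : 0 ≤ tiltTop q b m i := by
  unfold tiltTop
  split_ifs
  exacts [div_nonneg (hq i) (sum_nonneg fun k _ => hq k), le_rfl]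

theorem sum_levelSet_pos (hq : ∀ i, 0 < q i) (hj : b j = m) : 0 < ∑ k with b k = m, q k :=
  sum_pos (fun k _ => hq k) ⟨j, by simp [hj]⟩

theorem sum_tiltTop (hq : ∀ i, 0 < q i) (hj : b j = m) : ∑ i, tiltTop q b m i = 1 := by
  simp only [tiltTop]
  rw [← sum_filter, ← sum_div]
  exact div_self (sum_levelSet_pos hq hj).ne'

theorem sum_mul_tiltTop (hq : ∀ i, 0 < q i) (hj : b j = m) :
    ∑ i, b i * tiltTop q b m i = m := by
  have hterm (i : ι) : b i * tiltTop q b m i = m * tiltTop q b m i := by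
    unfold tiltTop
    split_ifs with h
    · rw [h]
    · simp
  rw [sum_congr rfl fun i _ => hterm i, ← mul_sum, sum_tiltTop hq hj, mul_one]

theorem tendsto_tilt_atTop (hq : ∀ i, 0 < q i) (hmin : ∀ i, m ≤ b i) (hj : b j = m) :
    Tendsto (tilt q b) atTop (𝓝 (tiltTop q b m)) := by
  have hnum (i : ι) : Tendsto (fun α => q i * exp (-α * (b i - m))) atTop
      (𝓝 (if b i = m then q i else 0)) := by
    simpa [sub_eq_zero] using tendsto_mul_exp_neg_mul_atTop (q i) (sub_nonneg.2 (hmin i))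
  have hden : Tendsto (partitionFn q fun i => b i - m) atTop (𝓝 (∑ k with b k = m, q k)) := by
    rw [sum_filter]
    exact tendsto_finsetSum _ fun i _ => hnum i
  refine tendsto_pi_nhds.2 fun i => ?_
  simp_rw [← tilt_sub_const b m]
  have hlim := (hnum i).div hden (sum_levelSet_pos hq hj).ne'
  rwa [show (if b i = m then q i else 0) / _ = tiltTop q b m i by
    unfold tiltTop; split_ifs <;> simp] at hlim

theorem relEntropy_tiltTop_le (hq : ∀ i, 0 < q i) (hmin : ∀ i, m ≤ b i) (hj : b j = m) {c : ℝ}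
    (hc : ∀ α, 0 ≤ α → klDual q b m α ≤ c) : relEntropy (tiltTop q b m) q ≤ c := by
  have : Nonempty ι := ⟨j⟩
  have hlim := ((continuous_relEntropy_left fun i => (hq i).ne').tendsto _).comp
    (tendsto_tilt_atTop hq hmin hj)
  refine le_of_tendsto hlim ?_
  filter_upwards [eventually_ge_atTop 0] with α hα
  have hmean : m ≤ ∑ i, b i * tilt q b α i :=
    calc m = ∑ i, m * tilt q b α i := by rw [← mul_sum, sum_tilt b hq, mul_one]
      _ ≤ _ := sum_le_sum fun i _ => mul_le_mul_of_nonneg_right (hmin i) (tilt_pos b hq α i).le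
  have hdual := klDual_eq_relEntropy_tilt_add b hq m α
  show relEntropy (tilt q b α) q ≤ c
  linarith [hc α hα, mul_nonneg hα (sub_nonneg.2 hmean)]

theorem exists_sum_mul_tilt_eq {β : ℝ} (hq : ∀ i, 0 < q i) (hq1 : ∑ i, q i = 1)
    (hmin : ∀ i, m ≤ b i) (hj : b j = m) (hmβ : m < β) (hβ : β < ∑ i, q i * b i) :
    ∃ α, 0 ≤ α ∧ ∑ i, b i * tilt q b α i = β := by
  have : Nonempty ι := ⟨j⟩
  set mean : ℝ → ℝ := fun α => ∑ i, b i * tilt q b α i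
  have hcont : Continuous mean := continuous_finsetSum _ fun i _ =>
    continuous_const.mul ((continuous_apply i).comp (continuous_tilt b hq))
  have hlim : Tendsto mean atTop (𝓝 m) := by
    rw [← sum_mul_tiltTop hq hj]
    exact tendsto_finsetSum _ fun i _ =>
      (((continuous_apply i).tendsto _).comp (tendsto_tilt_atTop hq hmin hj)).const_mul (b i)
  obtain ⟨A, hA, hA0⟩ := ((hlim.eventually_lt_const hmβ).and (eventually_ge_atTop 0)).exists
  have h0 : β ≤ mean 0 := by
    simp only [mean, tilt_zero b hq1, mul_comm (b _)]
    exact hβ.le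
  obtain ⟨α, hα, hαβ⟩ := intermediate_value_Icc' hA0 hcont.continuousOn ⟨hA.le, h0⟩
  exact ⟨α, hα.1, hαβ⟩

theorem exists_relEntropy_le_of_forall_klDual_le {β : ℝ} (hq : ∀ i, 0 < q i)
    (hq1 : ∑ i, q i = 1) (hmin : ∀ i, b j ≤ b i) (hjβ : b j ≤ β) (hβ : β < ∑ i, q i * b i) :
    ∃ p : ι → ℝ, (∀ i, 0 ≤ p i) ∧ ∑ i, p i = 1 ∧ ∑ i, b i * p i ≤ β ∧
      ∀ c, (∀ α, 0 ≤ α → klDual q b β α ≤ c) → relEntropy p q ≤ c := by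
  have : Nonempty ι := ⟨j⟩
  rcases hjβ.lt_or_eq with hjβ | rfl
  · obtain ⟨α, hα, hαβ⟩ := exists_sum_mul_tilt_eq hq hq1 hmin rfl hjβ hβ
    refine ⟨tilt q b α, fun i => (tilt_pos b hq α i).le, sum_tilt b hq α, hαβ.le, fun c hc => ?_⟩
    have hdual := klDual_eq_relEntropy_tilt_add b hq β α
    rw [hαβ, sub_self, mul_zero, add_zero] at hdual
    exact hdual ▸ hc α hα
  · exact ⟨tiltTop q b (b j), tiltTop_nonneg fun i => (hq i).le, sum_tiltTop hq rfl,
      (sum_mul_tiltTop hq rfl).le, fun c hc => relEntropy_tiltTop_le hq hmin rfl hc⟩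

end TiltTop

open Finset in
theorem kl_projection_duality_general {S : ℕ} (pbar b : Fin S → ℝ) (β : ℝ)
    (hp0 : ∀ i, 0 < pbar i) (hp1 : ∑ i, pbar i = 1)
    (hβ1 : (⨅ i, b i) ≤ β) (hβ2 : β < ∑ i, pbar i * b i) :
    sInf {v : ℝ | ∃ p : Fin S → ℝ, (∀ i, 0 ≤ p i) ∧ (∑ i, p i = 1) ∧
        (∑ i, b i * p i) ≤ β ∧ v = ∑ s', p s' * Real.log (p s' / pbar s')} =
    sSup {v : ℝ | ∃ α : ℝ, 0 ≤ α ∧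
        v = -β * α - Real.log (∑ s', pbar s' * Real.exp (-α * b s'))} := by
  have : Nonempty (Fin S) := univ_nonempty_iff.1 (nonempty_of_sum_ne_zero (hp1 ▸ one_ne_zero))
  obtain ⟨j, hj⟩ := Finite.exists_min b
  obtain ⟨p, hp, hps, hpb, hpopt⟩ :=
    exists_relEntropy_le_of_forall_klDual_le hp0 hp1 hj ((le_ciInf hj).trans hβ1) hβ2
  refine csInf_eq_csSup_of_forall_le ⟨_, 0, le_rfl, rfl⟩ ?_ ⟨p, hp, hps, hpb, rfl⟩ ?_
  · rintro _ ⟨p, hp, hps, hpb, rfl⟩ _ ⟨α, hα, rfl⟩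
    exact klDual_le_relEntropy b hp0 hp hps hpb hα
  · exact fun c hc => hpopt c fun α hα => hc ⟨α, hα, rfl⟩

open Finset in
/-- For the KL divergence, the optimal value of the projection problem
min { ∑ p log(p/p̄) : p ∈ Δ_S, bᵀp ≤ β } equals
sup_{α ≥ 0} { −βα − log(∑ p̄ e^{−α b}) }, provided p̄ > 0 and min b ≤ β < p̄ᵀb. -/
theorem kl_projection_duality {S : ℕ} [NeZero S] (pbar b : Fin S → ℝ) (β : ℝ)
    (hp0 : ∀ i, 0 < pbar i) (hp1 : ∑ i, pbar i = 1)
    (hb : ∀ i, 0 ≤ b i) (hβ0 : 0 ≤ β)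
    (hβ1 : (⨅ i, b i) ≤ β) (hβ2 : β < ∑ i, pbar i * b i) :
    sInf {v : ℝ | ∃ p : Fin S → ℝ, (∀ i, 0 ≤ p i) ∧ (∑ i, p i = 1) ∧
        (∑ i, b i * p i) ≤ β ∧ v = ∑ s', p s' * Real.log (p s' / pbar s')} =
    sSup {v : ℝ | ∃ α : ℝ, 0 ≤ α ∧
        v = -β * α - Real.log (∑ s', pbar s' * Real.exp (-α * b s'))} :=
  kl_projection_duality_general pbar b β hp0 hp1 hβ1 hβ2
end

section
/- For the variation distance, the optimal value of the projection problem min{ ∑_{s'} |p_{s'} − p̄_{s'}| : p ∈ Δ_S, bᵀp ≤ β } equals sup_{α ≥ 0} { 2 + α(min_i b_i − β) − ∑_{s'} p̄_{s'} · max{0, 2 + α(min_i b_i − b_{s'})} }, provided p̄ ∈ Δ_S with p̄ > 0 and min_i b_i ≤ β < p̄ᵀb. -/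
/-!
Weak duality is a pointwise estimate: for feasible `p`, `α ≥ 0` and
`y_s = [2 + α (min b - b_s)]₊ ∈ [0, 2]`, the budget constraint gives
`2 + α (min b - β) ≤ ∑ p_s y_s`, and `(p_s - p̄_s) y_s ≤ (p_s - p̄_s) + |p_s - p̄_s|`.

For the reverse inequality both sides are attained. Put `d = b - min b`. The optimal `p` keeps the
fraction `c_s` of `p̄_s`, where `c_s = 1` below a threshold `d_s < t`, `c_s = 0` above it and
`c_s ∈ [0, 1]` on the level `d_s = t` is tuned so that the budget is met exactly; the removed mass
`M` is moved to a minimiser of `b`, at cost `2 M`. For `α = 2 / t` the positive part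
`[2 - α d_s]₊` equals `c_s (2 - α d_s)`, and the dual objective collapses to `2 M` as well.
-/

open Finset

section VariationProjection

variable {ι : Type*} [Fintype ι]

lemma mul_le_add_abs {x y : ℝ} (hy0 : 0 ≤ y) (hy2 : y ≤ 2) : x * y ≤ x + |x| := by
  rcases abs_cases x with ⟨h, hx⟩ | ⟨h, hx⟩ <;> rw [h] <;> nlinarith

lemma max_zero_eq_mul {x c : ℝ} (hpos : 0 < x → c = 1) (hneg : x < 0 → c = 0) :
    max 0 x = c * x := by
  rcases lt_trichotomy x 0 with hx | rfl | hx
  · simp [hneg hx, hx.le]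
  · simp
  · simp [hpos hx, hx.le]

def dualObjective (w b : ι → ℝ) (m β α : ℝ) : ℝ :=
  2 + α * (m - β) - ∑ i, w i * max 0 (2 + α * (m - b i))

theorem dualObjective_le_sum_abs_sub {w b p : ι → ℝ} {m β α : ℝ} (hw : ∑ i, w i = 1)
    (hm : ∀ i, m ≤ b i) (hp0 : ∀ i, 0 ≤ p i) (hp1 : ∑ i, p i = 1)
    (hpb : ∑ i, b i * p i ≤ β) (hα : 0 ≤ α) :
    dualObjective w b m β α ≤ ∑ i, |p i - w i| := by
  set y := fun i => max 0 (2 + α * (m - b i))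
  have hy2 : ∀ i, y i ≤ 2 := fun i => max_le zero_le_two (by nlinarith [hm i])
  have hbudget : 2 + α * (m - β) ≤ ∑ i, p i * (2 + α * (m - b i)) := by
    have : ∑ i, p i * (2 + α * (m - b i)) = (2 + α * m) * ∑ i, p i - α * ∑ i, b i * p i := by
      simp only [mul_sum, ← sum_sub_distrib]
      exact sum_congr rfl fun i _ => by ring
    rw [this, hp1]
    nlinarith
  have hpos : ∑ i, p i * (2 + α * (m - b i)) ≤ ∑ i, p i * y i :=
    sum_le_sum fun i _ => mul_le_mul_of_nonneg_left (le_max_right _ _) (hp0 i)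
  calc dualObjective w b m β α ≤ ∑ i, p i * y i - ∑ i, w i * y i := by
        unfold dualObjective; linarith
    _ = ∑ i, (p i - w i) * y i := by simp only [sub_mul, sum_sub_distrib]
    _ ≤ ∑ i, ((p i - w i) + |p i - w i|) :=
        sum_le_sum fun i _ => mul_le_add_abs (le_max_left _ _) (hy2 i)
    _ = ∑ i, |p i - w i| := by rw [sum_add_distrib, sum_sub_distrib, hp1, hw, sub_self, zero_add]

theorem exists_threshold {w d : ι → ℝ} {D : ℝ} [Nonempty ι] (hd : ∀ i, 0 ≤ d i) (hD : 0 ≤ D)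
    (hDlt : D < ∑ i, w i * d i) :
    ∃ t, 0 < t ∧ ∑ i with d i < t, w i * d i ≤ D ∧ D < ∑ i with d i ≤ t, w i * d i := by
  set H : ℝ → ℝ := fun t => ∑ i with d i ≤ t, w i * d i
  obtain ⟨imax, himax⟩ := Finite.exists_max d
  have hHmax : H (d imax) = ∑ i, w i * d i := by
    simp only [H, filter_true_of_mem fun i _ => himax i]
  obtain ⟨i₁, hi₁, hmin⟩ := exists_min_image (univ.filter fun i => D < H (d i)) d
    ⟨imax, mem_filter.2 ⟨mem_univ _, hHmax ▸ hDlt⟩⟩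
  replace hi₁ : D < H (d i₁) := (mem_filter.1 hi₁).2
  refine ⟨d i₁, ?_, ?_, hi₁⟩
  · by_contra! ht
    have : H (d i₁) = 0 :=
      sum_eq_zero fun i hi => by simp [le_antisymm ((mem_filter.1 hi).2.trans ht) (hd i)]
    linarith
  · by_contra! hG
    obtain ⟨i₂, hi₂, hmax⟩ := exists_max_image (univ.filter fun i => d i < d i₁) d
      (nonempty_of_sum_ne_zero (f := fun i => w i * d i) (by linarith))
    replace hi₂ : d i₂ < d i₁ := (mem_filter.1 hi₂).2
    have hlevels : univ.filter (fun i => d i ≤ d i₂) = univ.filter fun i => d i < d i₁ :=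
      filter_congr fun i _ =>
        ⟨fun h => h.trans_lt hi₂, fun h => hmax i (mem_filter.2 ⟨mem_univ _, h⟩)⟩
    have : D < H (d i₂) := by simp only [H, hlevels]; exact hG
    exact absurd (hmin i₂ (mem_filter.2 ⟨mem_univ _, this⟩)) (not_le.2 hi₂)

theorem exists_threshold_fractions {w d : ι → ℝ} {D : ℝ} [Nonempty ι] (hd : ∀ i, 0 ≤ d i)
    (hD : 0 ≤ D) (hDlt : D < ∑ i, w i * d i) :
    ∃ t, 0 < t ∧ ∃ c : ι → ℝ, (∀ i, 0 ≤ c i ∧ c i ≤ 1) ∧ (∀ i, d i < t → c i = 1) ∧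
      (∀ i, t < d i → c i = 0) ∧ ∑ i, c i * w i * d i = D := by
  obtain ⟨t, ht, hG, hH⟩ := exists_threshold hd hD hDlt
  set G := ∑ i with d i < t, w i * d i
  set E := ∑ i with d i = t, w i * d i
  have hsplit : ∑ i with d i ≤ t, w i * d i = G + E := by
    simp only [G, E, sum_filter, ← sum_add_distrib]
    refine sum_congr rfl fun i _ => ?_
    rcases lt_trichotomy (d i) t with h | h | h
    · simp [h, h.le, h.ne]
    · simp [h]
    · simp [h.not_ge, h.not_gt, h.ne']
  set r := (D - G) / E
  have hE : 0 < E := by linarith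
  have hr0 : 0 ≤ r := div_nonneg (by linarith) hE.le
  have hr1 : r ≤ 1 := (div_le_one hE).2 (by linarith)
  refine ⟨t, ht, fun i => if d i < t then 1 else if d i = t then r else 0, fun i => ?_,
    fun i h => if_pos h, fun i h => by simp [h.not_gt, h.ne'], ?_⟩
  · dsimp only
    split_ifs <;> simp [hr0, hr1]
  · have : ∑ i, (if d i < t then 1 else if d i = t then r else 0) * w i * d i = G + r * E := by
      simp only [G, E, sum_filter, mul_sum, ← sum_add_distrib]
      refine sum_congr rfl fun i _ => ?_
      rcases lt_trichotomy (d i) t with h | h | h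
      · simp [h, h.ne]
      · simp [h]; ring
      · simp [h.not_gt, h.ne']
    rw [this, div_mul_cancel₀ _ hE.ne']
    ring

variable [DecidableEq ι]

def moveMass (w c : ι → ℝ) (s₀ : ι) : ι → ℝ :=
  fun i => c i * w i + if i = s₀ then ∑ j, (1 - c j) * w j else 0

lemma sum_mul_moveMass (f w c : ι → ℝ) (s₀ : ι) :
    ∑ i, f i * moveMass w c s₀ i = ∑ i, f i * c i * w i + f s₀ * ∑ j, (1 - c j) * w j := by
  simp only [moveMass, mul_add, sum_add_distrib, mul_ite, mul_zero, sum_ite_eq', mem_univ,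
    if_true, mul_assoc]

lemma sum_moveMass (w c : ι → ℝ) (s₀ : ι) : ∑ i, moveMass w c s₀ i = ∑ i, w i := by
  have h := sum_mul_moveMass 1 w c s₀
  simp only [Pi.one_apply, one_mul] at h
  rw [h, ← sum_add_distrib]
  exact sum_congr rfl fun i _ => by ring

lemma moveMass_nonneg {w c : ι → ℝ} (s₀ : ι) (hw : ∀ i, 0 ≤ w i) (hc : ∀ i, 0 ≤ c i ∧ c i ≤ 1)
    (i : ι) : 0 ≤ moveMass w c s₀ i := by
  have hM : 0 ≤ ∑ j, (1 - c j) * w j :=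
    sum_nonneg fun j _ => mul_nonneg (by linarith [hc j]) (hw j)
  have : 0 ≤ c i * w i := mul_nonneg (hc i).1 (hw i)
  unfold moveMass
  split_ifs <;> linarith

lemma sum_abs_moveMass_sub {w c : ι → ℝ} {s₀ : ι} (hw : ∀ i, 0 ≤ w i) (hc : ∀ i, c i ≤ 1)
    (hs₀ : c s₀ = 1) :
    ∑ i, |moveMass w c s₀ i - w i| = 2 * ∑ i, (1 - c i) * w i := by
  set M := ∑ j, (1 - c j) * w j
  have hM : 0 ≤ M := sum_nonneg fun j _ => mul_nonneg (by linarith [hc j]) (hw j)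
  have hterm : ∀ i, |moveMass w c s₀ i - w i| = (1 - c i) * w i + if i = s₀ then M else 0 := by
    intro i
    rcases eq_or_ne i s₀ with rfl | h
    · have : moveMass w c i i - w i = M := by simp [moveMass, hs₀, M]
      simp [this, abs_of_nonneg hM, hs₀]
    · have : c i * w i - w i = -((1 - c i) * w i) := by ring
      simp only [moveMass, if_neg h, add_zero, this, abs_neg]
      exact abs_of_nonneg (mul_nonneg (by linarith [hc i]) (hw i))
  simp only [hterm, sum_add_distrib, sum_ite_eq', mem_univ, if_true]
  ring

theorem exists_sum_abs_sub_eq_dualObjective {w b : ι → ℝ} {m β : ℝ} {s₀ : ι}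
    (hw0 : ∀ i, 0 ≤ w i) (hw1 : ∑ i, w i = 1) (hm : ∀ i, m ≤ b i) (hs₀ : b s₀ = m)
    (hβ : m ≤ β) :
    ∃ p : ι → ℝ, (∀ i, 0 ≤ p i) ∧ ∑ i, p i = 1 ∧ ∑ i, b i * p i ≤ β ∧
      ∃ α, 0 ≤ α ∧ dualObjective w b m β α = ∑ i, |p i - w i| := by
  by_cases hfeas : ∑ i, b i * w i ≤ β
  · refine ⟨w, hw0, hw1, hfeas, 0, le_rfl, ?_⟩
    simp [dualObjective, ← sum_mul, hw1]
  have : Nonempty ι := ⟨s₀⟩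
  have hbudget : β - m < ∑ i, w i * (b i - m) := by
    have : ∑ i, w i * (b i - m) = ∑ i, b i * w i - m * ∑ i, w i := by
      rw [mul_sum, ← sum_sub_distrib]
      exact sum_congr rfl fun i _ => by ring
    rw [this, hw1]
    linarith
  obtain ⟨t, ht, c, hc, hc1, hc0, hcD⟩ :=
    exists_threshold_fractions (fun i => sub_nonneg.2 (hm i)) (sub_nonneg.2 hβ) hbudget
  have hcs₀ : c s₀ = 1 := hc1 s₀ (by simpa [hs₀] using ht)
  have hpb : ∑ i, b i * moveMass w c s₀ i = β := by
    rw [sum_mul_moveMass, hs₀, mul_sum, ← sum_add_distrib]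
    calc ∑ i, (b i * c i * w i + m * ((1 - c i) * w i))
        = ∑ i, (c i * w i * (b i - m) + m * w i) := sum_congr rfl fun i _ => by ring
      _ = β := by rw [sum_add_distrib, hcD, ← mul_sum, hw1]; ring
  refine ⟨moveMass w c s₀, moveMass_nonneg s₀ hw0 hc, (sum_moveMass w c s₀).trans hw1,
    hpb.le, 2 / t, by positivity, ?_⟩
  have hx : ∀ i, 2 + 2 / t * (m - b i) = 2 / t * (t - (b i - m)) := fun i => by
    field_simp
    ring
  have hslack : ∀ i, max 0 (2 + 2 / t * (m - b i)) = c i * (2 + 2 / t * (m - b i)) :=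
    fun i => max_zero_eq_mul
      (fun h => hc1 i (sub_pos.1 (pos_of_mul_pos_right (hx i ▸ h) (by positivity))))
      (fun h => hc0 i (sub_neg.1 (neg_of_mul_neg_right (hx i ▸ h) (by positivity))))
  have hdual : ∑ i, w i * (c i * (2 + 2 / t * (m - b i))) =
      2 * ∑ i, c i * w i - 2 / t * ∑ i, c i * w i * (b i - m) := by
    rw [mul_sum, mul_sum, ← sum_sub_distrib]
    exact sum_congr rfl fun i _ => by ring
  have hM : ∑ i, (1 - c i) * w i = 1 - ∑ i, c i * w i := by
    simp only [sub_mul, one_mul, sum_sub_distrib, hw1]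
  rw [sum_abs_moveMass_sub hw0 (fun i => (hc i).2) hcs₀, dualObjective, sum_congr rfl
    fun i _ => by rw [hslack i], hdual, hcD, hM]
  ring

end VariationProjection

open Finset in
theorem variation_projection_duality_general {S : ℕ} [NeZero S] (pbar b : Fin S → ℝ) (β : ℝ)
    (hp0 : ∀ i, 0 < pbar i) (hp1 : ∑ i, pbar i = 1)
    (hβ1 : (⨅ i, b i) ≤ β) :
    sInf {v : ℝ | ∃ p : Fin S → ℝ, (∀ i, 0 ≤ p i) ∧ (∑ i, p i = 1) ∧
        (∑ i, b i * p i) ≤ β ∧ v = ∑ s', |p s' - pbar s'|} =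
    sSup {v : ℝ | ∃ α : ℝ, 0 ≤ α ∧
        v = 2 + α * ((⨅ i, b i) - β) -
          ∑ s', pbar s' * max 0 (2 + α * ((⨅ i, b i) - b s'))} := by
  obtain ⟨s₀, hs₀⟩ := exists_eq_ciInf_of_finite (f := b)
  have hm : ∀ i, (⨅ i, b i) ≤ b i := ciInf_le (Finite.bddBelow_range b)
  obtain ⟨p, hp0', hp1', hpb, α, hα, hopt⟩ :=
    exists_sum_abs_sub_eq_dualObjective (fun i => (hp0 i).le) hp1 hm hs₀ hβ1
  have hweak : ∀ α, 0 ≤ α → ∀ q : Fin S → ℝ, (∀ i, 0 ≤ q i) → ∑ i, q i = 1 →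
      ∑ i, b i * q i ≤ β → dualObjective pbar b (⨅ i, b i) β α ≤ ∑ i, |q i - pbar i| :=
    fun α hα q hq0 hq1 hqb => dualObjective_le_sum_abs_sub hp1 hm hq0 hq1 hqb hα
  rw [IsLeast.csInf_eq (a := ∑ i, |p i - pbar i|), IsGreatest.csSup_eq (a := ∑ i, |p i - pbar i|)]
  · exact ⟨⟨α, hα, hopt.symm⟩, by rintro v ⟨α', hα', rfl⟩; exact hweak α' hα' p hp0' hp1' hpb⟩
  · exact ⟨⟨p, hp0', hp1', hpb, rfl⟩, by
      rintro v ⟨q, hq0, hq1, hqb, rfl⟩; exact hopt ▸ hweak α hα q hq0 hq1 hqb⟩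

open Finset in
/-- For the variation distance, the optimal value of the projection problem
min { ∑ |p − p̄| : p ∈ Δ_S, bᵀp ≤ β } equals
sup_{α ≥ 0} { 2 + α(min b − β) − ∑ p̄ [2 + α(min b − b_{s'})]₊ },
provided p̄ > 0 and min b ≤ β < p̄ᵀb. -/
theorem variation_projection_duality {S : ℕ} [NeZero S] (pbar b : Fin S → ℝ) (β : ℝ)
    (hp0 : ∀ i, 0 < pbar i) (hp1 : ∑ i, pbar i = 1)
    (hb : ∀ i, 0 ≤ b i) (hβ0 : 0 ≤ β)
    (hβ1 : (⨅ i, b i) ≤ β) (hβ2 : β < ∑ i, pbar i * b i) :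
    sInf {v : ℝ | ∃ p : Fin S → ℝ, (∀ i, 0 ≤ p i) ∧ (∑ i, p i = 1) ∧
        (∑ i, b i * p i) ≤ β ∧ v = ∑ s', |p s' - pbar s'|} =
    sSup {v : ℝ | ∃ α : ℝ, 0 ≤ α ∧
        v = 2 + α * ((⨅ i, b i) - β) -
          ∑ s', pbar s' * max 0 (2 + α * ((⨅ i, b i) - b s'))} :=
  variation_projection_duality_general pbar b β hp0 hp1 hβ1
end

section
/- In the bivariate dual problem for the Burg entropy, maximize −βα + ζ + ∑_{s'} p̄_{s'} log(1 + α b_{s'} − ζ) over α ≥ 0, ζ ≤ 1 + α·min_i b_i: at any KKT point (α*, ζ*) with inactive constraint ζ* < 1 + α*·min_i b_i and with the stationarity conditions ∑_{s'} p̄_{s'} b_{s'}/(1 + α*b_{s'} − ζ*) = β − γ and ∑_{s'} p̄_{s'}/(1 + α*b_{s'} − ζ*) = 1 with α*γ = 0, γ ≥ 0, it holds that ζ* = α*β. -/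
/-! Every denominator is affine in `b`, namely `1 + α* b s' - ζ* = (1 - ζ*) + α* b s'`, so
combining the two stationarity conditions with weights `1 - ζ*` and `α*` recovers `∑ p̄ = 1`:
`(1 - ζ*) + α* (β - γ) = 1`. Complementary slackness `α* γ = 0` then gives `ζ* = α* β`. -/

theorem Finset.mul_sum_div_add_mul_sum_mul_div_of_affine {ι K : Type*} [Field K] (s : Finset ι)
    (p b d : ι → K) (c a : K) (hd : ∀ i ∈ s, d i = c + a * b i) (hd0 : ∀ i ∈ s, d i ≠ 0) :
    c * ∑ i ∈ s, p i / d i + a * ∑ i ∈ s, p i * b i / d i = ∑ i ∈ s, p i := by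
  rw [mul_sum, mul_sum, ← sum_add_distrib]
  refine sum_congr rfl fun i hi => ?_
  rw [mul_div_assoc', mul_div_assoc', ← add_div, div_eq_iff (hd0 i hi), hd i hi]
  ring

open Finset in
theorem burg_kkt_zeta_general {S : ℕ} (pbar b : Fin S → ℝ) (β αstar ζstar γ : ℝ)
    (hp1 : ∑ i, pbar i = 1)
    (hpos : ∀ s' : Fin S, 0 < 1 + αstar * b s' - ζstar)
    (hstat1 : ∑ s', pbar s' * b s' / (1 + αstar * b s' - ζstar) = β - γ)
    (hstat2 : ∑ s', pbar s' / (1 + αstar * b s' - ζstar) = 1)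
    (hcomp : αstar * γ = 0) :
    ζstar = αstar * β := by
  have h := univ.mul_sum_div_add_mul_sum_mul_div_of_affine pbar b
    (fun s' => 1 + αstar * b s' - ζstar) (1 - ζstar) αstar (fun _ _ => by ring)
    (fun s' _ => (hpos s').ne')
  rw [hstat1, hstat2, hp1] at h
  linear_combination -h - hcomp

open Finset in
/-- At a KKT point (α*, ζ*) of the bivariate Burg-entropy dual with inactive
constraint ζ* < 1 + α*·min b and stationarity conditions
∑ p̄ b/(1 + α*b − ζ*) = β − γ and ∑ p̄/(1 + α*b − ζ*) = 1 with α*γ = 0, γ ≥ 0,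
it holds that ζ* = α*β. -/
theorem burg_kkt_zeta {S : ℕ} [NeZero S] (pbar b : Fin S → ℝ) (β αstar ζstar γ : ℝ)
    (hp0 : ∀ i, 0 < pbar i) (hp1 : ∑ i, pbar i = 1)
    (hb : ∀ i, 0 ≤ b i) (hβ : (⨅ i, b i) < β)
    (hα : 0 ≤ αstar)
    (hpos : ∀ s' : Fin S, 0 < 1 + αstar * b s' - ζstar)
    (hinactive : ζstar < 1 + αstar * (⨅ i, b i))
    (hstat1 : ∑ s', pbar s' * b s' / (1 + αstar * b s' - ζstar) = β - γ)
    (hstat2 : ∑ s', pbar s' / (1 + αstar * b s' - ζstar) = 1)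
    (hcomp : αstar * γ = 0) (hγ : 0 ≤ γ) :
    ζstar = αstar * β :=
  burg_kkt_zeta_general pbar b β αstar ζstar γ hp1 hpos hstat1 hstat2 hcomp
end
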